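/- arXiv:2006.03655 — 2 statements merged into one kernel-verified Lean document; each statement's English description precedes it below -/
import Mathlib

section
/- Every subtle cardinal is inaccessible. That is, if δ is a subtle cardinal, then δ is an uncountable regular strong limit cardinal. -/
/-!
If `δ` is `0` or a successor, some club in `δ` has fewer than two points. On `ω` the club of
positive integers with `A_{n+1} = {n}` has no coherent pair. In all remaining cases the sequence
takes values `A_α ⊆ θ` for a fixed `θ < δ` and is injective on a club `C ⊆ [θ, δ)`, so coherence
`A_α = A_β ∩ α = A_β` is impossible. If `δ ≤ 2^θ`, use any injection of `δ` into `𝒫(θ)`. If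
`cf δ = κ < δ` with `F : κ → δ` cofinal, take `A_α = {ξ < κ | F ξ < α}` on the closure of
`{F ξ + 1}` above `κ`: between any two of its points lies a value of `F`.
-/

/-- `C` is a club in the ordinal `δ`: `C ⊆ δ`, `C` is unbounded in `δ`, and `C` is
closed in `δ` (every nonzero supremum below `δ` of a nonempty subset of `C` is in `C`). -/
def IsClubIn (C : Set Ordinal) (δ : Ordinal) : Prop :=
  C ⊆ Set.Iio δ ∧
  (∀ α < δ, ∃ β ∈ C, α ≤ β) ∧
  (∀ S : Set Ordinal, S ⊆ C → S.Nonempty → sSup S < δ → sSup S ≠ 0 → sSup S ∈ C)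

/-- A cardinal `δ` is subtle if for every club `C ⊆ δ` and every sequence
`⟨A_α : α ∈ C⟩` with `A_α ⊆ α`, there are `α < β` in `C` with `A_α = A_β ∩ α`. -/
def IsSubtle (δ : Cardinal) : Prop :=
  ∀ C : Set Ordinal, IsClubIn C δ.ord →
    ∀ A : Ordinal → Set Ordinal, (∀ α ∈ C, A α ⊆ Set.Iio α) →
      ∃ α ∈ C, ∃ β ∈ C, α < β ∧ A α = A β ∩ Set.Iio α

open Cardinal Ordinal Order Set Function

theorem IsClosed.isClubIn_inter_Iio {T : Set Ordinal} {δ : Ordinal} (hT : IsClosed T)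
    (hunb : ∀ α < δ, ∃ β ∈ T, β < δ ∧ α ≤ β) : IsClubIn (T ∩ Iio δ) δ := by
  refine ⟨inter_subset_right, fun α hα => ?_, fun S hS hne hlt _ => ⟨?_, hlt⟩⟩
  · obtain ⟨β, hβT, hβδ, hαβ⟩ := hunb α hα
    exact ⟨β, ⟨hβT, hβδ⟩, hαβ⟩
  · have hbdd : BddAbove S := ⟨δ, fun β hβ => (hS hβ).2.le⟩
    exact closure_minimal (hS.trans inter_subset_left) hT (csSup_mem_closure hne hbdd)

theorem Ordinal.exists_mem_Ico_of_mem_closure_range_add_one {ι : Type*} {f : ι → Ordinal}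
    {α β : Ordinal} (hβ : β ∈ closure (range fun i => f i + 1)) (hαβ : α < β) :
    ∃ i, f i ∈ Ico α β := by
  obtain ⟨_, ⟨hlo, hhi⟩, i, rfl⟩ :=
    mem_closure_iff.1 hβ (Ioo α (β + 1)) isOpen_Ioo ⟨hαβ, lt_add_one β⟩
  exact ⟨i, lt_add_one_iff.1 hlo, by simpa using hhi⟩

section Subtle

variable {δ : Cardinal}

theorem IsSubtle.exists_lt_of_isClubIn (h : IsSubtle δ) {C : Set Ordinal}
    (hC : IsClubIn C δ.ord) : ∃ α ∈ C, ∃ β ∈ C, α < β := by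
  obtain ⟨α, hα, β, hβ, hαβ, -⟩ := h C hC (fun _ => ∅) fun _ _ => empty_subset _
  exact ⟨α, hα, β, hβ, hαβ⟩

theorem IsSubtle.isSuccLimit_ord (h : IsSubtle δ) : IsSuccLimit δ.ord := by
  obtain h0 | ⟨p, hp⟩ | hlim := zero_or_succ_or_isSuccLimit δ.ord
  · have hC : IsClubIn (∅ ∩ Iio δ.ord) δ.ord :=
      isClosed_empty.isClubIn_inter_Iio fun α hα => by simp [h0] at hα
    obtain ⟨α, ⟨hα, -⟩, -⟩ := h.exists_lt_of_isClubIn hC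
    exact hα.elim
  · have hC : IsClubIn (Ici p ∩ Iio δ.ord) δ.ord :=
      isClosed_Ici.isClubIn_inter_Iio fun α hα =>
        ⟨p, self_mem_Ici, hp ▸ lt_succ p, lt_succ_iff.1 (hp ▸ hα)⟩
    obtain ⟨α, ⟨hpα, -⟩, β, ⟨-, hβ⟩, hαβ⟩ := h.exists_lt_of_isClubIn hC
    exact absurd (hpα.trans_lt hαβ) (lt_succ_iff.1 (hp ▸ hβ)).not_gt
  · exact hlim

theorem IsSubtle.not_injective (h : IsSubtle δ) {C : Set Ordinal} (hC : IsClubIn C δ.ord)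
    {θ : Ordinal} (hθ : ∀ α ∈ C, θ ≤ α) (f : C → Set (Iio θ)) : ¬ Injective f := by
  intro hf
  classical
  let A : Ordinal → Set Ordinal := fun α =>
    if hα : α ∈ C then Subtype.val '' f ⟨α, hα⟩ else ∅
  have hA : ∀ α (hα : α ∈ C), A α = Subtype.val '' f ⟨α, hα⟩ := fun α hα => dif_pos hα
  have hAθ : ∀ α ∈ C, A α ⊆ Iio θ := fun α hα => by
    rw [hA α hα]
    exact image_subset_iff.2 fun γ _ => γ.2
  obtain ⟨α, hα, β, hβ, hαβ, hAαβ⟩ :=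
    h C hC A fun α hα => (hAθ α hα).trans (Iio_subset_Iio (hθ α hα))
  rw [inter_eq_left.2 ((hAθ β hβ).trans (Iio_subset_Iio (hθ α hα))), hA α hα, hA β hβ,
    (Subtype.val_injective.image_injective).eq_iff] at hAαβ
  exact hαβ.ne (congrArg Subtype.val (hf hAαβ))

theorem IsSubtle.ne_aleph0 (h : IsSubtle δ) : δ ≠ ℵ₀ := by
  rintro rfl
  have hC : IsClubIn (Ici 1 ∩ Iio ω) (ℵ₀ : Cardinal).ord := by
    rw [ord_aleph0]
    exact isClosed_Ici.isClubIn_inter_Iio fun α hα =>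
      ⟨max α 1, mem_Ici.2 (le_max_right _ _), max_lt hα one_lt_omega0, le_max_left _ _⟩
  obtain ⟨α, ⟨hα1, hαω⟩, β, -, hαβ, hA⟩ :=
    h _ hC (fun α => {γ | succ γ = α}) fun α _ γ hγ => hγ ▸ lt_succ γ
  obtain ⟨p, rfl⟩ : ∃ p, succ p = α := by
    obtain h0 | ⟨p, hp⟩ | hlim := zero_or_succ_or_isSuccLimit α
    · exact absurd (h0 ▸ hα1) (by simp)
    · exact ⟨p, hp⟩
    · exact absurd (omega0_le_of_isSuccLimit hlim) hαω.not_ge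
  have hp : p ∈ {γ | succ γ = succ p} := rfl
  rw [hA] at hp
  exact hαβ.ne hp.1

theorem IsSubtle.two_power_lt (h : IsSubtle δ) {μ : Cardinal} (hμ : μ < δ) : 2 ^ μ < δ := by
  by_contra! hle
  have hcard : #(Iio δ.ord) ≤ #(Set (Iio μ.ord)) := by
    rw [Cardinal.mk_Iio_ordinal, mk_set, Cardinal.mk_Iio_ordinal, card_ord, card_ord]
    simpa only [lift_power, lift_two] using lift_le.2 hle
  obtain ⟨j⟩ := hcard
  have hC : IsClubIn (Ici μ.ord ∩ Iio δ.ord) δ.ord :=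
    isClosed_Ici.isClubIn_inter_Iio fun α hα =>
      ⟨max α μ.ord, mem_Ici.2 (le_max_right _ _), max_lt hα (ord_lt_ord.2 hμ), le_max_left _ _⟩
  exact h.not_injective hC (fun α hα => hα.1) (fun α => j (inclusion inter_subset_right α))
    (j.injective.comp (inclusion_injective _))

theorem IsSubtle.le_cof_ord (h : IsSubtle δ) (hδ : IsSuccLimit δ.ord) : δ ≤ δ.ord.cof := by
  by_contra! hcof
  set κ := δ.ord.cof.ord
  obtain ⟨F, hF⟩ := exists_isFundamentalSeq (o := δ.ord) (a := κ) rfl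
  set T := closure (range fun ξ => (F ξ : Ordinal) + 1) ∩ Ici κ
  have hC : IsClubIn (T ∩ Iio δ.ord) δ.ord := by
    refine (isClosed_closure.inter isClosed_Ici).isClubIn_inter_Iio fun α hα => ?_
    obtain ⟨_, ⟨ξ, rfl⟩, hξ⟩ := hF.isCofinal_range ⟨max α κ, max_lt hα (ord_lt_ord.2 hcof)⟩
    have hξ : max α κ ≤ F ξ + 1 := (show max α κ ≤ F ξ from hξ).trans (lt_add_one _).le
    exact ⟨F ξ + 1, ⟨subset_closure ⟨ξ, rfl⟩, le_of_max_le_right hξ⟩, hδ.add_one_lt (F ξ).2,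
      le_of_max_le_left hξ⟩
  refine h.not_injective hC (fun α hα => hα.1.2) (fun α => {ξ | (F ξ : Ordinal) < α}) ?_
  refine StrictMono.injective fun α β hαβ => ?_
  refine (ssubset_iff_of_subset fun ξ (hξ : (F ξ : Ordinal) < α) => hξ.trans hαβ).2 ?_
  obtain ⟨ξ, hαξ, hξβ⟩ := exists_mem_Ico_of_mem_closure_range_add_one β.2.1.1 hαβ
  exact ⟨ξ, hξβ, hαξ.not_gt⟩

end Subtle

/-- Every subtle cardinal is inaccessible: uncountable, regular, and a strong limit. -/
theorem subtle_isInaccessible (δ : Cardinal) (h : IsSubtle δ) :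
    Cardinal.aleph0 < δ ∧ δ.IsRegular ∧ δ.IsStrongLimit := by
  have hlim := h.isSuccLimit_ord
  have hℵ : ℵ₀ ≤ δ := omega0_le_ord.1 (omega0_le_of_isSuccLimit hlim)
  exact ⟨hℵ.lt_of_ne' h.ne_aleph0, ⟨hℵ, h.le_cof_ord hlim⟩,
    ⟨(aleph0_pos.trans_le hℵ).ne', fun _ hμ => h.two_power_lt hμ⟩⟩
end

section
/- Every subtle cardinal is regular: if δ is a subtle cardinal, then the cofinality of δ equals δ. -/
open Ordinal Order Set

theorem isClubIn_singleton (γ : Ordinal) : IsClubIn {γ} (succ γ) := by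
  refine ⟨by simp, fun α hα => ⟨γ, rfl, lt_succ_iff.1 hα⟩, fun S hS hne _ _ => ?_⟩
  rw [hne.subset_singleton_iff.1 hS, csSup_singleton]
  rfl

theorem IsSubtle.exists_lt_eq_of_regressive {δ : Cardinal} (h : IsSubtle δ) {C : Set Ordinal}
    (hC : IsClubIn C δ.ord) {g : Ordinal → Ordinal} (hg : ∀ α ∈ C, g α < α) :
    ∃ α ∈ C, ∃ β ∈ C, α < β ∧ g α = g β := by
  obtain ⟨α, hα, β, hβ, hαβ, hA⟩ := h C hC (fun α => {g α}) (by simpa using hg)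
  have hmem : g α ∈ ({g β} ∩ Iio α : Set Ordinal) := hA ▸ rfl
  exact ⟨α, hα, β, hβ, hαβ, hmem.1⟩

section CofinalMap

variable {κ o : Ordinal} {f : Iio κ → Iio o}

theorem exists_lt_apply_of_isCofinal (ho : IsSuccLimit o) (hf : IsCofinal (range f)) {x : Ordinal}
    (hx : x < o) : ∃ j, x < f j := by
  obtain ⟨_, ⟨j, rfl⟩, hj⟩ := hf ⟨succ x, ho.succ_lt hx⟩
  exact ⟨j, succ_le_iff.1 hj⟩

-- The bound `κ < α` is what makes `firstIndexAbove f` regressive on this set.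
def accumulationPoints (f : Iio κ → Iio o) : Set Ordinal :=
  {α | κ < α ∧ α < o ∧ ∀ x < α, ∃ j, x < f j ∧ (f j : Ordinal) ≤ α}

theorem isClubIn_accumulationPoints (ho : IsSuccLimit o) (hκ : κ < o)
    (hf : IsCofinal (range f)) : IsClubIn (accumulationPoints f) o := by
  refine ⟨fun α hα => hα.2.1, fun α hα => ?_, fun S hS hne hSo _ => ?_⟩
  · obtain ⟨j, hj⟩ := exists_lt_apply_of_isCofinal ho hf (max_lt hα hκ)
    rw [max_lt_iff] at hj
    exact ⟨f j, ⟨hj.2, (f j).2, fun x hx => ⟨j, hx, le_rfl⟩⟩, hj.1.le⟩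
  · have hbdd : BddAbove S := ⟨o, fun α hα => (hS hα).2.1.le⟩
    obtain ⟨a, ha⟩ := hne
    refine ⟨(hS ha).1.trans_le (le_csSup hbdd ha), hSo, fun x hx => ?_⟩
    obtain ⟨b, hb, hxb⟩ := (lt_csSup_iff hbdd ⟨a, ha⟩).1 hx
    obtain ⟨j, hxj, hjb⟩ := (hS hb).2.2 x hxb
    exact ⟨j, hxj, hjb.trans (le_csSup hbdd hb)⟩

-- `sInf ∅ = 0`: the value is junk when no `f j` exceeds `α`.
noncomputable def firstIndexAbove (f : Iio κ → Iio o) (α : Ordinal) : Ordinal :=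
  sInf ((↑) '' {j : Iio κ | α < f j})

theorem firstIndexAbove_le {α : Ordinal} {j : Iio κ} (hj : α < f j) :
    firstIndexAbove f α ≤ j :=
  csInf_le' (mem_image_of_mem _ hj)

theorem exists_firstIndexAbove (ho : IsSuccLimit o) (hf : IsCofinal (range f)) {α : Ordinal}
    (hα : α < o) : ∃ j : Iio κ, α < f j ∧ (j : Ordinal) = firstIndexAbove f α := by
  obtain ⟨j, hj⟩ := exists_lt_apply_of_isCofinal ho hf hα
  have hne : ((↑) '' {j : Iio κ | α < f j} : Set Ordinal).Nonempty := ⟨j, j, hj, rfl⟩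
  exact csInf_mem hne

theorem firstIndexAbove_lt (ho : IsSuccLimit o) (hf : IsCofinal (range f)) {α : Ordinal}
    (hα : α < o) : firstIndexAbove f α < κ := by
  obtain ⟨j, -, hj⟩ := exists_firstIndexAbove ho hf hα
  exact hj ▸ j.2

theorem strictMonoOn_firstIndexAbove (ho : IsSuccLimit o) (hmono : Monotone f)
    (hf : IsCofinal (range f)) : StrictMonoOn (firstIndexAbove f) (accumulationPoints f) := by
  intro α _ β ⟨_, hβo, hβ⟩ hαβ
  obtain ⟨j, hαj, hjβ⟩ := hβ α hαβ
  obtain ⟨k, hβk, hk⟩ := exists_firstIndexAbove ho hf hβo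
  have hjk : j < k := lt_of_not_ge fun hkj => (hβk.trans_le (hmono hkj)).not_ge hjβ
  exact (firstIndexAbove_le hαj).trans_lt (hk ▸ hjk)

end CofinalMap

theorem exists_isClubIn_regressive_strictMonoOn {o : Ordinal} (ho : IsSuccLimit o)
    (hcof : o.cof.ord < o) :
    ∃ C g, IsClubIn C o ∧ (∀ α ∈ C, g α < α) ∧ StrictMonoOn g C := by
  obtain ⟨f, hf⟩ := exists_isFundamentalSeq (o := o) rfl
  have hcofinal := hf.isCofinal_range
  refine ⟨accumulationPoints f, firstIndexAbove f, isClubIn_accumulationPoints ho hcof hcofinal,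
    fun α hα => ?_, strictMonoOn_firstIndexAbove ho hf.strictMono.monotone hcofinal⟩
  exact (firstIndexAbove_lt ho hcofinal hα.2.1).trans hα.1

/-- Every subtle cardinal is regular: its cofinality equals itself. -/
theorem subtle_isRegular (δ : Cardinal) (h : IsSubtle δ) :
    δ.ord.cof = δ := by
  refine (Ordinal.cof_ord_le δ).antisymm (not_lt.1 fun hlt => ?_)
  have hlt' : δ.ord.cof.ord < δ.ord := Cardinal.ord_lt_ord.2 hlt
  rcases zero_or_succ_or_isSuccLimit δ.ord with h0 | ⟨γ, hγ⟩ | hlim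
  · simp [h0] at hlt'
  · obtain ⟨α, hα, β, hβ, hαβ, -⟩ :=
      h {γ} (hγ ▸ isClubIn_singleton γ) (fun _ => ∅) (by simp)
    rw [mem_singleton_iff] at hα hβ
    exact hαβ.ne (hα.trans hβ.symm)
  · obtain ⟨C, g, hC, hg, hmono⟩ := exists_isClubIn_regressive_strictMonoOn hlim hlt'
    obtain ⟨α, hα, β, hβ, hαβ, heq⟩ := h.exists_lt_eq_of_regressive hC hg
    exact (hmono hα hβ hαβ).ne heq
end
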